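/- Let 0 < b₁ ≤ b₂ ≤ b₃ be real numbers and define f(x) = 6·Real.arcsin(1/(2·Real.cosh(x/2))) + 2·∑_{i=1}^{2} Real.arcsin(Real.cosh(b_i/2)/Real.cosh(x/2)). If f(b₃) > π, then there exists a unique x ∈ (b₃, ∞) satisfying f(x) + 2·Real.arcsin(Real.cosh(b₃/2)/Real.cosh(x/2)) = 2π. -/

import Mathlib

/-!
Every term `arcsin (c / cosh (x / 2))` with `0 < c ≤ cosh (b₃ / 2)` is continuous, strictly
decreasing on `[b₃, ∞)` and tends to `0`. Hence the left-hand side decreases strictly from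
`f b₃ + 2 · arcsin 1 = f b₃ + π > 2π` at `x = b₃` to `0` at infinity, so it takes the value `2π`
exactly once on `(b₃, ∞)`.
-/

open Real Set Filter Topology

lemma Real.tendsto_cosh_atTop : Tendsto cosh atTop atTop :=
  tendsto_atTop_mono' atTop
    ((eventually_ge_atTop 0).mono fun x hx => (self_le_sinh_iff.2 hx).trans (sinh_lt_cosh x).le)
    tendsto_id

lemma strictAntiOn_arcsin_div_cosh_half {b c : ℝ} (hb : 0 ≤ b) (hc : 0 < c)
    (hcb : c ≤ cosh (b / 2)) :
    StrictAntiOn (fun x => arcsin (c / cosh (x / 2))) (Ici b) := by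
  intro x (hx : b ≤ x) y (hy : b ≤ y) hxy
  have hcosh : cosh (x / 2) < cosh (y / 2) :=
    cosh_strictMonoOn (by simp; linarith) (by simp; linarith) (by linarith)
  have hcb' : c ≤ cosh (x / 2) :=
    hcb.trans (cosh_strictMonoOn.monotoneOn (by simp; linarith) (by simp; linarith) (by linarith))
  refine strictMonoOn_arcsin ⟨?_, ?_⟩ ⟨?_, ?_⟩ (div_lt_div_of_pos_left hc (cosh_pos _) hcosh)
  · linarith [div_pos hc (cosh_pos (y / 2))]
  · exact (div_le_one (cosh_pos _)).2 (hcb'.trans hcosh.le)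
  · linarith [div_pos hc (cosh_pos (x / 2))]
  · exact (div_le_one (cosh_pos _)).2 hcb'

lemma continuous_arcsin_div_cosh_half (c : ℝ) :
    Continuous fun x => arcsin (c / cosh (x / 2)) :=
  continuous_arcsin.comp <| continuous_const.div (by fun_prop) fun x => (cosh_pos _).ne'

lemma tendsto_arcsin_div_cosh_half_atTop (c : ℝ) :
    Tendsto (fun x => arcsin (c / cosh (x / 2))) atTop (𝓝 0) := by
  rw [← arcsin_zero]
  exact continuous_arcsin.continuousAt.tendsto.comp <|
    tendsto_const_nhds.div_atTop <| tendsto_cosh_atTop.comp <| tendsto_id.atTop_div_const two_pos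

lemma existsUnique_mem_Ioi_eq_of_strictAntiOn {g : ℝ → ℝ} {a y : ℝ}
    (hcont : ContinuousOn g (Ici a)) (hanti : StrictAntiOn g (Ici a)) (ha : y < g a)
    (hlim : ∀ᶠ x in atTop, g x < y) :
    ∃! x, x ∈ Ioi a ∧ g x = y := by
  obtain ⟨X, hX, hgX⟩ := ((eventually_gt_atTop a).and hlim).exists
  obtain ⟨x, hx, hgx⟩ :=
    intermediate_value_Ioo' hX.le (hcont.mono Icc_subset_Ici_self) ⟨hgX, ha⟩
  refine ⟨x, ⟨hx.1, hgx⟩, fun z ⟨hz, hgz⟩ => ?_⟩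
  exact hanti.injOn (mem_Ici_of_Ioi hz) (mem_Ici_of_Ioi hx.1) (hgz.trans hgx.symm)

/-- Theorem maximal sysloops, part (a), existence and uniqueness of the maximizer:
if `0 < b₁ ≤ b₂ ≤ b₃` and `f(b₃) > π`, where
`f(x) = 6·arcsin(1/(2cosh(x/2))) + 2·arcsin(cosh(b₁/2)/cosh(x/2)) + 2·arcsin(cosh(b₂/2)/cosh(x/2))`,
then there is a unique `x ∈ (b₃, ∞)` with
`f(x) + 2·arcsin(cosh(b₃/2)/cosh(x/2)) = 2π`. -/
theorem stmt_4 (b₁ b₂ b₃ : ℝ) (hb₁ : 0 < b₁) (h12 : b₁ ≤ b₂) (h23 : b₂ ≤ b₃)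
    (f : ℝ → ℝ)
    (hf : ∀ x, f x = 6 * Real.arcsin (1 / (2 * Real.cosh (x / 2)))
      + 2 * (Real.arcsin (Real.cosh (b₁ / 2) / Real.cosh (x / 2))
        + Real.arcsin (Real.cosh (b₂ / 2) / Real.cosh (x / 2))))
    (h : Real.pi < f b₃) :
    ∃! x : ℝ, x ∈ Set.Ioi b₃ ∧
      f x + 2 * Real.arcsin (Real.cosh (b₃ / 2) / Real.cosh (x / 2)) = 2 * Real.pi := by
  set A : ℝ → ℝ → ℝ := fun c x => arcsin (c / cosh (x / 2))
  have hg : ∀ x, f x + 2 * A (cosh (b₃ / 2)) x =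
      6 * A (1 / 2) x + 2 * (A (cosh (b₁ / 2)) x + A (cosh (b₂ / 2)) x)
        + 2 * A (cosh (b₃ / 2)) x := fun x => by
    simp only [hf, A, div_div]
  have hb₃ : 0 ≤ b₃ := by linarith
  have hcosh_le {b : ℝ} (hb : 0 ≤ b) (hbb₃ : b ≤ b₃) : cosh (b / 2) ≤ cosh (b₃ / 2) :=
    cosh_strictMonoOn.monotoneOn (by simp; linarith) (by simp; linarith) (by linarith)
  have hanti {c : ℝ} (hc : 0 < c) (hcb : c ≤ cosh (b₃ / 2)) : StrictAntiOn (A c) (Ici b₃) :=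
    strictAntiOn_arcsin_div_cosh_half hb₃ hc hcb
  refine existsUnique_mem_Ioi_eq_of_strictAntiOn (g := fun x => f x + 2 * A (cosh (b₃ / 2)) x)
    ?_ ?_ ?_ ?_
  · have := continuous_arcsin_div_cosh_half
    simp only [hg]
    exact Continuous.continuousOn (by fun_prop)
  · intro x hx y hy hxy
    simp only [hg]
    have := hanti (c := 1 / 2) one_half_pos (by linarith [one_le_cosh (b₃ / 2)]) hx hy hxy
    have := hanti (cosh_pos _) (hcosh_le hb₁.le (h12.trans h23)) hx hy hxy
    have := hanti (cosh_pos _) (hcosh_le (hb₁.le.trans h12) h23) hx hy hxy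
    have := hanti (cosh_pos _) le_rfl hx hy hxy
    linarith
  · have : A (cosh (b₃ / 2)) b₃ = π / 2 := by
      simp only [A, div_self (cosh_pos _).ne', arcsin_one]
    simp only [this]
    linarith
  · have hlim : Tendsto (fun x => f x + 2 * A (cosh (b₃ / 2)) x) atTop (𝓝 0) := by
      simp only [hg]
      have := tendsto_arcsin_div_cosh_half_atTop
      simpa using ((((this _).const_mul 6).add (((this _).add (this _)).const_mul 2)).add
        ((this _).const_mul 2))
    exact hlim.eventually (gt_mem_nhds two_pi_pos)
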